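/- arXiv:1609.02342 — 4 statements merged into one kernel-verified Lean document; each statement's English description precedes it below -/
import Mathlib

section
/- If Z is gamma distributed with shape α > 0 and rate λ > 0, and φ : (0,∞) → ℝ is continuously differentiable with (λz - α)φ(z) and z·φ'(z) integrable against the gamma density, then E[(λZ - α)·φ(Z)] = E[Z·φ'(Z)]. -/
/-!
Write `p` for the gamma density. On `(0, ∞)` one has `(x p(x))' = (α - λx) p(x)`, so integrating
by parts `E[Z φ'(Z)] = ∫ x p φ' = -∫ (x p)' φ = E[(λZ - α) φ(Z)]`, provided the boundary term
`G(x) = x p(x) φ(x)` vanishes at both ends. Its derivative `p (x φ' - (λx - α) φ)` is integrable,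
so `G` has limits at `0⁺` and at `∞`. Both limits vanish because `p (λx - α) φ`, which is
integrable, equals `(λ - α/x) G(x)` near `∞` and `x⁻¹ (λx - α) G(x)` near `0`, where `x⁻¹` is not
integrable.
-/

open MeasureTheory ProbabilityTheory Real Set Filter Topology Asymptotics

section BoundaryValues
variable {E : Type*} [NormedAddCommGroup E] [NormedSpace ℝ E]

theorem not_integrableOn_inv_smul_of_tendsto_nhdsGT {F : ℝ → E} {L : E} {s : Set ℝ}
    (hF : Tendsto F (𝓝[>] 0) (𝓝 L)) (hL : L ≠ 0) (hs : s ∈ 𝓝[>] 0) :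
    ¬IntegrableOn (fun x => x⁻¹ • F x) s := by
  have hF_bdd : (fun _ => (1 : ℝ)) =O[𝓝[>] 0] F :=
    (isBigO_const_left_iff_pos_le_norm one_ne_zero).2 ⟨‖L‖ / 2, by positivity,
      hF.norm.eventually (eventually_ge_nhds (half_lt_self (norm_pos_iff.2 hL)))⟩
  -- `x⁻¹` is the derivative of `log`, which is unbounded at `0⁺`.
  refine not_integrableOn_of_tendsto_norm_atTop_of_deriv_isBigO_filter (𝓝[>] 0) hs
    (f := log) ?_ (tendsto_abs_atBot_atTop.comp tendsto_log_nhdsGT_zero) ?_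
  · filter_upwards [self_mem_nhdsWithin] with x hx
    exact differentiableAt_log (ne_of_gt hx)
  · simpa [Real.deriv_log'] using (isBigO_refl (fun x : ℝ => x⁻¹) (𝓝[>] 0)).smul hF_bdd

variable [CompleteSpace E] {f f' : ℝ → E} {w : ℝ → ℝ} {a b c : ℝ}

theorem tendsto_nhdsGT_of_hasDerivAt_of_integrableOn_Ioc
    (hab : a < b) (hderiv : ∀ x ∈ Ioc a b, HasDerivAt f (f' x) x)
    (hf' : IntegrableOn f' (Ioc a b)) :
    Tendsto f (𝓝[>] a) (𝓝 (f b - ∫ x in a..b, f' x)) := by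
  have hprim : ContinuousWithinAt (fun x => ∫ t in x..b, f' t) (Icc a b) a := by
    have hIcc : IntegrableOn f' (uIcc a b) := by
      rw [uIcc_of_le hab.le]; exact (integrableOn_Icc_iff_integrableOn_Ioc).mpr hf'
    have := intervalIntegral.continuousOn_primitive_interval_left hIcc
    rw [uIcc_of_le hab.le] at this
    exact this a (left_mem_Icc.2 hab.le)
  have hprim' :=
    (hprim.tendsto.mono_left (nhdsWithin_mono a Ioc_subset_Icc_self)).const_sub (f b)
  rw [nhdsWithin_Ioc_eq_nhdsGT hab] at hprim'
  refine hprim'.congr' ?_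
  filter_upwards [Ioc_mem_nhdsGT hab] with x hx
  rw [intervalIntegral.integral_eq_sub_of_hasDerivAt, sub_sub_cancel]
  · intro y hy
    rw [uIcc_of_le hx.2] at hy
    exact hderiv y ⟨hx.1.trans_le hy.1, hy.2⟩
  · rw [intervalIntegrable_iff_integrableOn_Ioc_of_le hx.2]
    exact hf'.mono_set (Ioc_subset_Ioc_left hx.1.le)

theorem tendsto_zero_nhdsGT_of_hasDerivAt_of_integrableOn_inv_smul
    (hb : 0 < b) (hderiv : ∀ x ∈ Ioc 0 b, HasDerivAt f (f' x) x)
    (hf' : IntegrableOn f' (Ioc 0 b)) (hw : Tendsto w (𝓝[>] 0) (𝓝 c)) (hc : c ≠ 0)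
    (hwf : IntegrableOn (fun x => x⁻¹ • w x • f x) (Ioc 0 b)) :
    Tendsto f (𝓝[>] 0) (𝓝 0) := by
  have hlim := tendsto_nhdsGT_of_hasDerivAt_of_integrableOn_Ioc hb hderiv hf'
  suffices hL : f b - ∫ x in 0..b, f' x = 0 by rwa [hL] at hlim
  by_contra hL
  exact not_integrableOn_inv_smul_of_tendsto_nhdsGT (hw.smul hlim) (smul_ne_zero hc hL)
    (Ioc_mem_nhdsGT hb) hwf

theorem tendsto_zero_atTop_of_hasDerivAt_of_integrableOn_smul
    (hderiv : ∀ x ∈ Ioi a, HasDerivAt f (f' x) x) (hf' : IntegrableOn f' (Ioi a))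
    (hw : Tendsto w atTop (𝓝 c)) (hc : c ≠ 0) (hwf : IntegrableOn (fun x => w x • f x) (Ioi a)) :
    Tendsto f atTop (𝓝 0) := by
  have hlim := tendsto_limUnder_of_hasDerivAt_of_integrableOn_Ioi hderiv hf'
  have hvol : ∀ s ∈ (atTop : Filter ℝ), volume s = ⊤ := fun s hs => by
    obtain ⟨x, hx⟩ := mem_atTop_sets.1 hs
    rw [← top_le_iff, ← volume_Ici (a := x)]
    exact measure_mono hx
  have hL :=
    IntegrableAtFilter.eq_zero_of_tendsto ⟨Ioi a, Ioi_mem_atTop a, hwf⟩ hvol (hw.smul hlim)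
  rwa [← (smul_eq_zero_iff_right hc).1 hL]

end BoundaryValues

section Gamma
variable {E : Type*} [NormedAddCommGroup E] [NormedSpace ℝ E] {a r : ℝ}

theorem integral_gammaMeasure (ha : 0 < a) (hr : 0 < r) (f : ℝ → E) :
    ∫ x, f x ∂gammaMeasure a r = ∫ x in Ioi 0, gammaPDFReal a r x • f x := by
  have hmeas : Measurable (gammaPDF a r) := (measurable_gammaPDFReal a r).ennreal_ofReal
  rw [gammaMeasure, integral_withDensity_eq_integral_toReal_smul hmeas
    (ae_of_all _ fun _ => ENNReal.ofReal_lt_top)]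
  simp only [gammaPDF, ENNReal.toReal_ofReal (gammaPDFReal_nonneg ha hr _)]
  rw [← integral_Ici_eq_integral_Ioi, setIntegral_eq_integral_of_forall_compl_eq_zero]
  intro x hx
  rw [gammaPDFReal, if_neg (show ¬0 ≤ x from hx), zero_smul]

theorem integrableOn_Ioi_of_integrable_gammaMeasure (ha : 0 < a) (hr : 0 < r) {f : ℝ → E}
    (hf : Integrable f (gammaMeasure a r)) :
    IntegrableOn (fun x => gammaPDFReal a r x • f x) (Ioi 0) := by
  have hmeas : Measurable (gammaPDF a r) := (measurable_gammaPDFReal a r).ennreal_ofReal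
  rw [gammaMeasure, integrable_withDensity_iff_integrable_smul' hmeas
    (ae_of_all _ fun _ => ENNReal.ofReal_lt_top)] at hf
  simp only [gammaPDF, ENNReal.toReal_ofReal (gammaPDFReal_nonneg ha hr _)] at hf
  exact hf.integrableOn

theorem hasDerivAt_mul_gammaPDFReal (a r : ℝ) {x : ℝ} (hx : 0 < x) :
    HasDerivAt (fun y => y * gammaPDFReal a r y) ((a - r * x) * gammaPDFReal a r x) x := by
  have hpow : HasDerivAt (fun y => y ^ a * exp (-(r * y)))
      (a * x ^ (a - 1) * exp (-(r * x)) + x ^ a * (exp (-(r * x)) * -r)) x := by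
    refine (hasDerivAt_rpow_const (Or.inl hx.ne')).mul ?_
    simpa using ((hasDerivAt_id x).const_mul r).neg.exp
  refine (hpow.const_mul (r ^ a / Gamma a)).congr_of_eventuallyEq ?_ |>.congr_deriv ?_
  · filter_upwards [lt_mem_nhds hx] with y hy
    rw [gammaPDFReal, if_pos hy.le, rpow_sub_one hy.ne']
    field_simp
  · rw [gammaPDFReal, if_pos hx.le, rpow_sub_one hx.ne']
    field_simp
    ring

end Gamma

section Stein
variable {α lam : ℝ} {φ φ' : ℝ → ℝ}

theorem hasDerivAt_mul_gammaPDFReal_mul (hφ : ∀ x ∈ Ioi 0, HasDerivAt φ (φ' x) x) {x : ℝ}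
    (hx : 0 < x) :
    HasDerivAt (fun y => y * gammaPDFReal α lam y * φ y)
      (gammaPDFReal α lam x * (x * φ' x) - gammaPDFReal α lam x * ((lam * x - α) * φ x)) x :=
  ((hasDerivAt_mul_gammaPDFReal α lam hx).mul (hφ x hx)).congr_deriv (by ring)

theorem tendsto_mul_gammaPDFReal_mul_atTop (hlam : 0 < lam)
    (hφ : ∀ x ∈ Ioi 0, HasDerivAt φ (φ' x) x)
    (h₁ : IntegrableOn (fun x => gammaPDFReal α lam x * ((lam * x - α) * φ x)) (Ioi 0))
    (h₂ : IntegrableOn (fun x => gammaPDFReal α lam x * (x * φ' x)) (Ioi 0)) :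
    Tendsto (fun x => x * gammaPDFReal α lam x * φ x) atTop (𝓝 0) := by
  have hw : Tendsto (fun x : ℝ => lam - α / x) atTop (𝓝 lam) := by
    simpa using tendsto_const_nhds.sub ((tendsto_const_nhds (x := α)).div_atTop tendsto_id)
  refine tendsto_zero_atTop_of_hasDerivAt_of_integrableOn_smul
    (fun x hx => hasDerivAt_mul_gammaPDFReal_mul hφ hx) (h₂.sub h₁) hw hlam.ne' ?_
  refine h₁.congr_fun (fun x (hx : 0 < x) => ?_) measurableSet_Ioi
  simp only [smul_eq_mul]
  field_simp

theorem tendsto_mul_gammaPDFReal_mul_nhdsGT (hα : 0 < α)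
    (hφ : ∀ x ∈ Ioi 0, HasDerivAt φ (φ' x) x)
    (h₁ : IntegrableOn (fun x => gammaPDFReal α lam x * ((lam * x - α) * φ x)) (Ioi 0))
    (h₂ : IntegrableOn (fun x => gammaPDFReal α lam x * (x * φ' x)) (Ioi 0)) :
    Tendsto (fun x => x * gammaPDFReal α lam x * φ x) (𝓝[>] 0) (𝓝 0) := by
  have hw : Tendsto (fun x : ℝ => lam * x - α) (𝓝[>] 0) (𝓝 (-α)) := by
    have := ((continuous_const_mul lam).sub continuous_const).tendsto (0 : ℝ)
      (f := fun x => lam * x - α)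
    simpa using this.mono_left nhdsWithin_le_nhds
  refine tendsto_zero_nhdsGT_of_hasDerivAt_of_integrableOn_inv_smul one_pos
    (fun x hx => hasDerivAt_mul_gammaPDFReal_mul hφ hx.1)
    ((h₂.sub h₁).mono_set Ioc_subset_Ioi_self) hw (neg_ne_zero.2 hα.ne') ?_
  refine (h₁.mono_set Ioc_subset_Ioi_self).congr_fun (fun x hx => ?_) measurableSet_Ioc
  simp only [smul_eq_mul]
  field_simp [hx.1.ne']

end Stein

theorem gamma_stein_identity_general (α lam : ℝ) (hα : 0 < α) (hlam : 0 < lam)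
    (φ : ℝ → ℝ) (hφ : ∀ x ∈ Set.Ioi (0 : ℝ), DifferentiableAt ℝ φ x)
    (hint1 : Integrable (fun z => (lam * z - α) * φ z) (gammaMeasure α lam))
    (hint2 : Integrable (fun z => z * deriv φ z) (gammaMeasure α lam)) :
    ∫ z, (lam * z - α) * φ z ∂(gammaMeasure α lam)
      = ∫ z, z * deriv φ z ∂(gammaMeasure α lam) := by
  have hφ' : ∀ x ∈ Ioi 0, HasDerivAt φ (deriv φ x) x := fun x hx => (hφ x hx).hasDerivAt
  have h₁ := integrableOn_Ioi_of_integrable_gammaMeasure hα hlam hint1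
  have h₂ := integrableOn_Ioi_of_integrable_gammaMeasure hα hlam hint2
  simp only [smul_eq_mul] at h₁ h₂
  have hboundary := integral_Ioi_deriv_mul_eq_sub
    (fun x hx => hasDerivAt_mul_gammaPDFReal α lam hx) hφ'
    ((h₂.sub h₁).congr_fun
      (fun x _ => by simp only [Pi.add_apply, Pi.mul_apply, Pi.sub_apply]; ring) measurableSet_Ioi)
    (tendsto_mul_gammaPDFReal_mul_nhdsGT hα hφ' h₁ h₂)
    (tendsto_mul_gammaPDFReal_mul_atTop hlam hφ' h₁ h₂)
  rw [integral_gammaMeasure hα hlam, integral_gammaMeasure hα hlam, eq_comm, ← sub_eq_zero]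
  simp only [smul_eq_mul]
  rw [← integral_sub h₂ h₁]
  refine (setIntegral_congr_fun measurableSet_Ioi fun x _ => ?_).trans
    (hboundary.trans (sub_self 0))
  ring

/-- **Stein's identity for the gamma distribution.** If `Z ~ Gamma(α, λ)` with shape `α > 0`
and rate `λ > 0`, and `φ` is continuously differentiable on `(0,∞)` with `(λz - α)φ(z)` and
`z·φ'(z)` integrable against the gamma density, then `E[(λZ - α)·φ(Z)] = E[Z·φ'(Z)]`. -/
theorem gamma_stein_identity (α lam : ℝ) (hα : 0 < α) (hlam : 0 < lam)
    (φ : ℝ → ℝ) (hφ : ∀ x ∈ Set.Ioi (0 : ℝ), DifferentiableAt ℝ φ x)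
    (hφ' : ContinuousOn (deriv φ) (Set.Ioi 0))
    (hint1 : Integrable (fun z => (lam * z - α) * φ z) (gammaMeasure α lam))
    (hint2 : Integrable (fun z => z * deriv φ z) (gammaMeasure α lam)) :
    ∫ z, (lam * z - α) * φ z ∂(gammaMeasure α lam)
      = ∫ z, z * deriv φ z ∂(gammaMeasure α lam) :=
  gamma_stein_identity_general α lam hα hlam φ hφ hint1 hint2
end

section
/- Let X have mean 0 and variance 1, N standard Gaussian independent of X, and X_r = √r X + N. Then (1/r)·J_st(X_r) = 1 - (1+r)·E[(X - E[X | X_r])²], where J_st(X_r) = (1+r)·E[ρ_r(X_r)²] - 1 with ρ_r the score of X_r. -/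
open MeasureTheory ProbabilityTheory Real

/-!
Let `Y = E[X | X_r]` and `G = √r Y - X_r`, so that `ρ(X_r) = G` a.s. and `N = -(G + √r (X - Y))`.
The summand `G` is `X_r`-measurable while the residual `X - Y` is orthogonal in `L²` to every
square-integrable `X_r`-measurable function, so Pythagoras gives
`1 = E[N²] = E[ρ(X_r)²] + r E[(X - Y)²]`; the identity is a rearrangement of this.
-/

lemma integral_sq_gaussianReal_zero (v : NNReal) : ∫ x, x ^ 2 ∂gaussianReal 0 v = v := by
  have h := variance_fun_id_gaussianReal (μ := 0) (v := v)
  rw [variance_eq_integral aemeasurable_id', integral_id_gaussianReal] at h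
  simpa using h

section

variable {Ω : Type*} {m₀ : MeasurableSpace Ω} {μ : Measure Ω}

lemma memLp_of_map_eq_gaussianReal {N : Ω → ℝ} (hNmeas : Measurable N) {m : ℝ} {v : NNReal}
    (hN : μ.map N = gaussianReal m v) (p : NNReal) : MemLp N p μ :=
  (memLp_map_measure_iff aestronglyMeasurable_id hNmeas.aemeasurable).1
    (hN ▸ memLp_id_gaussianReal p)

lemma integral_sq_of_map_eq_gaussianReal_zero {N : Ω → ℝ} (hNmeas : Measurable N) {v : NNReal}
    (hN : μ.map N = gaussianReal 0 v) : ∫ ω, N ω ^ 2 ∂μ = v := by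
  rw [← integral_sq_gaussianReal_zero, ← hN, integral_map hNmeas.aemeasurable (by fun_prop)]

lemma integral_add_const_mul_sq_of_integral_mul_eq_zero {f g : Ω → ℝ} (hf : MemLp f 2 μ)
    (hg : MemLp g 2 μ) (horth : ∫ ω, f ω * g ω ∂μ = 0) (c : ℝ) :
    ∫ ω, (f ω + c * g ω) ^ 2 ∂μ = ∫ ω, f ω ^ 2 ∂μ + c ^ 2 * ∫ ω, g ω ^ 2 ∂μ := by
  have hfg : Integrable (fun ω => f ω * g ω) μ := hf.integrable_mul hg
  have hcross : Integrable (fun ω => f ω ^ 2 + 2 * c * (f ω * g ω)) μ :=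
    hf.integrable_sq.add (hfg.const_mul _)
  calc ∫ ω, (f ω + c * g ω) ^ 2 ∂μ
      = ∫ ω, (f ω ^ 2 + 2 * c * (f ω * g ω)) + c ^ 2 * g ω ^ 2 ∂μ := by
        congr with ω; ring
    _ = ∫ ω, f ω ^ 2 ∂μ + 2 * c * ∫ ω, f ω * g ω ∂μ + c ^ 2 * ∫ ω, g ω ^ 2 ∂μ := by
        rw [integral_add hcross (hg.integrable_sq.const_mul _),
          integral_add hf.integrable_sq (hfg.const_mul _), integral_const_mul, integral_const_mul]
    _ = _ := by rw [horth]; ring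

lemma integral_mul_sub_condExp_eq_zero [IsFiniteMeasure μ] {m : MeasurableSpace Ω} (hm : m ≤ m₀)
    {f g : Ω → ℝ} (hf : MemLp f 2 μ) (hg : MemLp g 2 μ) (hgm : StronglyMeasurable[m] g) :
    ∫ ω, g ω * (f ω - μ[f|m] ω) ∂μ = 0 := by
  have hgf : Integrable (fun ω => g ω * f ω) μ := hg.integrable_mul hf
  have hgcond : Integrable (fun ω => g ω * μ[f|m] ω) μ := hg.integrable_mul (hf.condExp one_le_two)
  have hpull : ∫ ω, g ω * f ω ∂μ = ∫ ω, g ω * μ[f|m] ω ∂μ := calc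
    ∫ ω, g ω * f ω ∂μ = ∫ ω, μ[g * f|m] ω ∂μ := (integral_condExp hm).symm
    _ = _ := integral_congr_ae (condExp_mul_of_stronglyMeasurable_left hgm hgf
        (hf.integrable one_le_two))
  simp_rw [mul_sub]
  rw [integral_sub hgf hgcond, hpull, sub_self]

end

theorem standardized_fisher_eq_mmse_general
    {Ω : Type*} [MeasureSpace Ω] [IsProbabilityMeasure (ℙ : Measure Ω)]
    (X N : Ω → ℝ) (hXmeas : Measurable X) (hNmeas : Measurable N)
    (hN : Measure.map N ℙ = gaussianReal 0 1)
    (hX2 : Integrable (fun ω => (X ω) ^ 2) ℙ)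
    (r : ℝ) (hr : 0 < r)
    (Xr : Ω → ℝ) (hXr : Xr = fun ω => Real.sqrt r * X ω + N ω)
    (ρ : ℝ → ℝ)
    (hρ : (fun ω => ρ (Xr ω))
      =ᵐ[ℙ] fun ω =>
        Real.sqrt r * (ℙ[X | MeasurableSpace.comap Xr inferInstance]) ω - Xr ω) :
    (1 / r) * ((1 + r) * (∫ ω, (ρ (Xr ω)) ^ 2 ∂ℙ) - 1)
      = 1 - (1 + r) *
          ∫ ω, (X ω - (ℙ[X | MeasurableSpace.comap Xr inferInstance]) ω) ^ 2 ∂ℙ := by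
  have hXL2 : MemLp X 2 ℙ := (memLp_two_iff_integrable_sq hXmeas.aestronglyMeasurable).2 hX2
  have hNL2 : MemLp N 2 ℙ := memLp_of_map_eq_gaussianReal hNmeas hN 2
  have hXrmeas : Measurable Xr := hXr ▸ (measurable_const.mul hXmeas).add hNmeas
  have hm : MeasurableSpace.comap Xr inferInstance ≤ MeasureSpace.toMeasurableSpace :=
    hXrmeas.comap_le
  set Y := ℙ[X | MeasurableSpace.comap Xr inferInstance]
  set G := fun ω => √r * Y ω - Xr ω
  have hGm : StronglyMeasurable[MeasurableSpace.comap Xr inferInstance] G :=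
    (stronglyMeasurable_const.mul stronglyMeasurable_condExp).sub
      (Measurable.of_comap_le le_rfl).stronglyMeasurable
  have hGL2 : MemLp G 2 ℙ :=
    ((hXL2.condExp one_le_two).const_mul _).sub (hXr ▸ (hXL2.const_mul _).add hNL2)
  have hDL2 : MemLp (fun ω => X ω - Y ω) 2 ℙ := hXL2.sub (hXL2.condExp one_le_two)
  have hpythagoras : ∫ ω, N ω ^ 2 ∂ℙ = ∫ ω, G ω ^ 2 ∂ℙ + r * ∫ ω, (X ω - Y ω) ^ 2 ∂ℙ := by
    rw [← sq_sqrt hr.le, ← integral_add_const_mul_sq_of_integral_mul_eq_zero hGL2 hDL2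
      (integral_mul_sub_condExp_eq_zero hm hXL2 hGL2 hGm)]
    congr with ω
    simp only [G, hXr]
    ring
  rw [integral_sq_of_map_eq_gaussianReal_zero hNmeas hN, NNReal.coe_one] at hpythagoras
  have hscore : ∫ ω, ρ (Xr ω) ^ 2 ∂ℙ = ∫ ω, G ω ^ 2 ∂ℙ := integral_congr_ae (hρ.fun_comp (· ^ 2))
  rw [hscore, eq_sub_of_add_eq hpythagoras.symm]
  field_simp
  ring

/-- **Fisher information / MMSE identity in the Gaussian channel.** Let `X` have mean `0` and
variance `1`, `N` standard Gaussian independent of `X`, and `X_r = √r X + N`. With `ρ_r` the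
score of `X_r` (satisfying `ρ_r(X_r) = √r E[X|X_r] - X_r` a.s.), the standardized Fisher
information `J_st(X_r) = (1+r)E[ρ_r(X_r)²] - 1` satisfies
`(1/r)·J_st(X_r) = 1 - (1+r)·E[(X - E[X|X_r])²]`. -/
theorem standardized_fisher_eq_mmse
    {Ω : Type*} [MeasureSpace Ω] [IsProbabilityMeasure (ℙ : Measure Ω)]
    (X N : Ω → ℝ) (hXmeas : Measurable X) (hNmeas : Measurable N)
    (hindep : IndepFun X N ℙ)
    (hN : Measure.map N ℙ = gaussianReal 0 1)
    (hX2 : Integrable (fun ω => (X ω) ^ 2) ℙ)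
    (hmean : ∫ ω, X ω ∂ℙ = 0) (hvar : ∫ ω, (X ω) ^ 2 ∂ℙ = 1)
    (r : ℝ) (hr : 0 < r)
    (Xr : Ω → ℝ) (hXr : Xr = fun ω => Real.sqrt r * X ω + N ω)
    (ρ : ℝ → ℝ)
    (hρ2_int : Integrable (fun ω => (ρ (Xr ω)) ^ 2) ℙ)
    (hρ : (fun ω => ρ (Xr ω))
      =ᵐ[ℙ] fun ω =>
        Real.sqrt r * (ℙ[X | MeasurableSpace.comap Xr inferInstance]) ω - Xr ω) :
    (1 / r) * ((1 + r) * (∫ ω, (ρ (Xr ω)) ^ 2 ∂ℙ) - 1)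
      = 1 - (1 + r) *
          ∫ ω, (X ω - (ℙ[X | MeasurableSpace.comap Xr inferInstance]) ω) ^ 2 ∂ℙ :=
  standardized_fisher_eq_mmse_general X N hXmeas hNmeas hN hX2 r hr Xr hXr ρ hρ
end

section
/- For a positive random variable X with E[X] = α/λ and a > 0, the standardized gamma Fisher information satisfies J_{st,γ(α,λ)}(aX) = J_{st,γ(α,aλ)}(X) = (1/a)·J_{st,γ(α,λ)}(X) + α(a-1)²/a. -/
/-!
Substituting `x = a y` turns the score of the density `x ↦ p (x / a) / a` into `ρ(y) / a` and
`λ - (α - 1) / x` into `(a λ - (α - 1) / y) / a`, so the first identity is a change of variables.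
For the second, write `a λ = λ + c` with `c = (a - 1) λ` and expand the square: the extra terms
are multiples of `E[X ρ(X)] = -1`, `E[X] = α / λ` and `E[1] = 1`, and add up to `λ α (a - 1)²`.
-/

open MeasureTheory ProbabilityTheory Real

/-- Standardized gamma Fisher information of a positive random variable with density `p`:
`J_{st,γ(α,λ)}(X) = (1/λ)·E[X·(ρ_X(X) + λ - (α-1)/X)²]` where `ρ_X = p'/p`. -/
noncomputable def Jstgamma (α lam : ℝ) (p : ℝ → ℝ) : ℝ :=
  (1 / lam) * ∫ x in Set.Ioi (0 : ℝ),
    x * (deriv p x / p x + lam - (α - 1) / x) ^ 2 * p x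

open Set

theorem deriv_comp_div_const_div (p : ℝ → ℝ) (a x : ℝ) :
    deriv (fun x => p (x / a) / a) x = deriv p (x / a) / a ^ 2 := by
  have hcomp : (fun x => p (x / a)) = (fun x => p (a⁻¹ * x)) := by
    simp only [div_eq_inv_mul]
  rw [deriv_div_const, hcomp, deriv_comp_mul_left, smul_eq_mul]
  field_simp

noncomputable def gammaFisherIntegrand (α lam : ℝ) (p : ℝ → ℝ) (x : ℝ) : ℝ :=
  x * (deriv p x / p x + lam - (α - 1) / x) ^ 2 * p x

theorem Jstgamma_eq (α lam : ℝ) (p : ℝ → ℝ) :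
    Jstgamma α lam p = (1 / lam) * ∫ x in Ioi (0 : ℝ), gammaFisherIntegrand α lam p x :=
  rfl

theorem gammaFisherIntegrand_comp_div_const_div (α lam : ℝ) (p : ℝ → ℝ) {a x : ℝ}
    (ha : a ≠ 0) (hx : x ≠ 0) :
    gammaFisherIntegrand α lam (fun x => p (x / a) / a) x
      = gammaFisherIntegrand α (a * lam) p (x / a) / a ^ 2 := by
  have hxa : x / a ≠ 0 := div_ne_zero hx ha
  rcases eq_or_ne (p (x / a)) 0 with hp | hp
  · simp [gammaFisherIntegrand, hp]
  · simp only [gammaFisherIntegrand, deriv_comp_div_const_div]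
    field_simp

theorem Jstgamma_comp_div_const_div (α lam : ℝ) (p : ℝ → ℝ) {a : ℝ} (ha : 0 < a) :
    Jstgamma α lam (fun x => p (x / a) / a) = Jstgamma α (a * lam) p := by
  have hchange : ∫ x in Ioi (0 : ℝ), gammaFisherIntegrand α lam (fun x => p (x / a) / a) x
      = ∫ x in Ioi (0 : ℝ), gammaFisherIntegrand α (a * lam) p (x * a⁻¹) / a ^ 2 := by
    refine setIntegral_congr_fun measurableSet_Ioi fun x hx => ?_
    rw [gammaFisherIntegrand_comp_div_const_div α lam p ha.ne' (ne_of_gt hx), div_eq_mul_inv x]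
  have hsubst := integral_comp_mul_right_Ioi
    (fun y => gammaFisherIntegrand α (a * lam) p y / a ^ 2) 0 (inv_pos.mpr ha)
  rw [Jstgamma_eq, Jstgamma_eq, hchange, hsubst, zero_mul, inv_inv, smul_eq_mul,
    integral_div]
  field_simp

theorem gammaFisherIntegrand_add (α lam c : ℝ) (p : ℝ → ℝ) {x : ℝ} (hx : x ≠ 0) :
    gammaFisherIntegrand α (lam + c) p x
      = gammaFisherIntegrand α lam p x + 2 * c * (x * (deriv p x / p x) * p x)
        + (2 * c * lam + c ^ 2) * (x * p x) - 2 * c * (α - 1) * p x := by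
  simp only [gammaFisherIntegrand]
  generalize deriv p x / p x = ρ
  field_simp
  ring

theorem integral_gammaFisherIntegrand_add (α lam c : ℝ) {p : ℝ → ℝ}
    (hJ : IntegrableOn (gammaFisherIntegrand α lam p) (Ioi 0))
    (hscore : IntegrableOn (fun x => x * (deriv p x / p x) * p x) (Ioi 0))
    (hmean : IntegrableOn (fun x => x * p x) (Ioi 0))
    (hp : IntegrableOn p (Ioi 0)) :
    ∫ x in Ioi (0 : ℝ), gammaFisherIntegrand α (lam + c) p x
      = (∫ x in Ioi (0 : ℝ), gammaFisherIntegrand α lam p x)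
        + 2 * c * (∫ x in Ioi (0 : ℝ), x * (deriv p x / p x) * p x)
        + (2 * c * lam + c ^ 2) * (∫ x in Ioi (0 : ℝ), x * p x)
        - 2 * c * (α - 1) * ∫ x in Ioi (0 : ℝ), p x := by
  have hJ_score : IntegrableOn
      (fun x => gammaFisherIntegrand α lam p x + 2 * c * (x * (deriv p x / p x) * p x))
      (Ioi 0) :=
    hJ.add (hscore.const_mul _)
  have hJ_score_mean : IntegrableOn
      (fun x => gammaFisherIntegrand α lam p x + 2 * c * (x * (deriv p x / p x) * p x)
        + (2 * c * lam + c ^ 2) * (x * p x)) (Ioi 0) :=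
    hJ_score.add (hmean.const_mul _)
  rw [setIntegral_congr_fun measurableSet_Ioi
      fun x hx => gammaFisherIntegrand_add α lam c p (ne_of_gt hx),
    integral_sub hJ_score_mean (hp.const_mul _),
    integral_add hJ_score (hmean.const_mul _), integral_add hJ (hscore.const_mul _),
    integral_const_mul, integral_const_mul, integral_const_mul]

theorem Jstgamma_mul_rate (α lam a : ℝ) (hlam : lam ≠ 0) (ha : a ≠ 0) {p : ℝ → ℝ}
    (hp_prob : ∫ x in Ioi (0 : ℝ), p x = 1)
    (hmean : ∫ x in Ioi (0 : ℝ), x * p x = α / lam)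
    (hscore : ∫ x in Ioi (0 : ℝ), x * (deriv p x / p x) * p x = -1)
    (hmean_int : IntegrableOn (fun x => x * p x) (Ioi 0))
    (hJ : IntegrableOn (gammaFisherIntegrand α lam p) (Ioi 0)) :
    Jstgamma α (a * lam) p = (1 / a) * Jstgamma α lam p + α * (a - 1) ^ 2 / a := by
  have hp_int : IntegrableOn p (Ioi 0) := .of_integral_ne_zero (by simp [hp_prob])
  have hscore_int : IntegrableOn (fun x => x * (deriv p x / p x) * p x) (Ioi 0) :=
    .of_integral_ne_zero (by simp [hscore])
  have hrate : a * lam = lam + (a - 1) * lam := by ring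
  rw [Jstgamma_eq, Jstgamma_eq, hrate,
    integral_gammaFisherIntegrand_add α lam _ hJ hscore_int hmean_int hp_int,
    hp_prob, hmean, hscore, ← hrate]
  field_simp
  ring

theorem Jstgamma_scaling_general (α lam a : ℝ) (hα : 0 < α) (hlam : 0 < lam) (ha : 0 < a)
    (p : ℝ → ℝ)
    (hp_prob : ∫ x in Set.Ioi (0 : ℝ), p x = 1)
    (hmean : ∫ x in Set.Ioi (0 : ℝ), x * p x = α / lam)
    (hscore : ∫ x in Set.Ioi (0 : ℝ), x * (deriv p x / p x) * p x = -1)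
    (hint : IntegrableOn
      (fun x => x * (deriv p x / p x + lam - (α - 1) / x) ^ 2 * p x) (Set.Ioi 0)) :
    Jstgamma α lam (fun x => p (x / a) / a) = Jstgamma α (a * lam) p ∧
    Jstgamma α (a * lam) p = (1 / a) * Jstgamma α lam p + α * (a - 1) ^ 2 / a := by
  have hmean_int : IntegrableOn (fun x => x * p x) (Ioi 0) :=
    .of_integral_ne_zero (by rw [hmean]; positivity)
  exact ⟨Jstgamma_comp_div_const_div α lam p ha,
    Jstgamma_mul_rate α lam a hlam.ne' ha.ne' hp_prob hmean hscore hmean_int hint⟩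

/-- **Scaling of standardized gamma Fisher information.** For a positive `X` with density `p`,
mean `E[X] = α/λ` and `a > 0`:
`J_{st,γ(α,λ)}(aX) = J_{st,γ(α,aλ)}(X) = (1/a)·J_{st,γ(α,λ)}(X) + α(a-1)²/a`.
(The density of `aX` is `x ↦ p(x/a)/a`.) -/
theorem Jstgamma_scaling (α lam a : ℝ) (hα : 0 < α) (hlam : 0 < lam) (ha : 0 < a)
    (p : ℝ → ℝ) (hp_nonneg : ∀ x, 0 ≤ p x) (hp_supp : ∀ x ≤ (0 : ℝ), p x = 0)
    (hp_meas : Measurable p)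
    (hp_diff : ∀ x ∈ Set.Ioi (0 : ℝ), DifferentiableAt ℝ p x)
    (hp_prob : ∫ x in Set.Ioi (0 : ℝ), p x = 1)
    (hmean : ∫ x in Set.Ioi (0 : ℝ), x * p x = α / lam)
    (hscore : ∫ x in Set.Ioi (0 : ℝ), x * (deriv p x / p x) * p x = -1)
    (hint : IntegrableOn
      (fun x => x * (deriv p x / p x + lam - (α - 1) / x) ^ 2 * p x) (Set.Ioi 0))
    (hint' : IntegrableOn
      (fun x => x * (deriv p x / p x + a * lam - (α - 1) / x) ^ 2 * p x) (Set.Ioi 0)) :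
    Jstgamma α lam (fun x => p (x / a) / a) = Jstgamma α (a * lam) p ∧
    Jstgamma α (a * lam) p = (1 / a) * Jstgamma α lam p + α * (a - 1) ^ 2 / a :=
  Jstgamma_scaling_general α lam a hα hlam ha p hp_prob hmean hscore hint
end

section
/- Let X be positive with moment generating function M_X finite on (0, a), α ≥ 1/2, λ > 0, r > 0. Define X_r = G + (√(rX) + N/√(2λ))², where G ~ Gamma(α - 1/2, λ) and N is standard Gaussian, with G, N, X mutually independent. Then E[exp(t X_r)] = (1 - t/λ)^{-α} · M_X(rt / (1 - t/λ)) for 0 < t < λ/(λr/a + 1). -/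
/-!
Conditionally on `X = x`, the variable `(√(r x) + N/√(2λ))²` is a scaled noncentral `χ²₁`; completing
the square in the Gaussian density turns its MGF at `t` into `(1 - t/λ)^{-1/2} exp(r t x/(1 - t/λ))`.
Independence lets the Gamma MGF `(1 - t/λ)^{-(α - 1/2)}` factor out, and averaging over `X` leaves
`M_X(r t/(1 - t/λ))`. All expectations are computed as `ℝ≥0∞`-valued lintegrals and converted to
real integrals only at the end.
-/

open MeasureTheory ProbabilityTheory Real
open scoped NNReal ENNReal

lemma gammaMeasure_zero_left (r : ℝ) : gammaMeasure 0 r = 0 := by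
  have : gammaPDF 0 r = 0 := by
    ext x
    simp [gammaPDF, gammaPDFReal]
  simp [gammaMeasure, this]

lemma measurable_gammaPDF (a r : ℝ) : Measurable (gammaPDF a r) :=
  (measurable_gammaPDFReal a r).ennreal_ofReal

lemma gammaPDF_mul_exp_mul {β lam t : ℝ} (hlam : 0 < lam) (ht : t < lam) (x : ℝ) :
    gammaPDF β lam x * ENNReal.ofReal (rexp (t * x))
      = ENNReal.ofReal ((1 - t / lam) ^ (-β)) * gammaPDF β (lam - t) x := by
  have hlt : 0 < lam - t := by linarith
  have hd : 1 - t / lam = (lam - t) / lam := by field_simp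
  rcases lt_or_ge x 0 with hx | hx
  · simp [gammaPDF_of_neg hx]
  rw [gammaPDF_of_nonneg hx, gammaPDF_of_nonneg hx, hd,
    ← ENNReal.ofReal_mul' (exp_pos _).le, ← ENNReal.ofReal_mul (by positivity)]
  congr 1
  have hexp : rexp (-(lam * x)) * rexp (t * x) = rexp (-((lam - t) * x)) := by
    rw [← exp_add]; ring_nf
  rw [rpow_neg (by positivity), div_rpow hlt.le hlam.le, inv_div, ← hexp]
  field_simp

lemma lintegral_exp_mul_gammaMeasure {β lam t : ℝ} (hβ : 0 < β) (hlam : 0 < lam) (ht : t < lam) :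
    ∫⁻ x, ENNReal.ofReal (rexp (t * x)) ∂gammaMeasure β lam
      = ENNReal.ofReal ((1 - t / lam) ^ (-β)) := by
  rw [gammaMeasure, lintegral_withDensity_eq_lintegral_mul _ (measurable_gammaPDF β lam)
    (by fun_prop)]
  simp only [Pi.mul_apply, gammaPDF_mul_exp_mul hlam ht]
  rw [lintegral_const_mul _ (measurable_gammaPDF β _), lintegral_gammaPDF_eq_one hβ (by linarith),
    mul_one]

lemma gaussianPDFReal_mul_exp_mul_sq_add {s : ℝ} (hs : s < 1 / 2) (m x : ℝ) :
    gaussianPDFReal 0 1 x * rexp (s * (m + x) ^ 2)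
      = (1 - 2 * s) ^ (-(1 / 2 : ℝ)) * rexp (s * m ^ 2 / (1 - 2 * s))
        * gaussianPDFReal (2 * s * m / (1 - 2 * s)) (1 - 2 * s)⁻¹.toNNReal x := by
  have hd : 0 < 1 - 2 * s := by linarith
  have hv : (((1 - 2 * s)⁻¹.toNNReal : ℝ≥0) : ℝ) = (1 - 2 * s)⁻¹ :=
    coe_toNNReal _ (by positivity)
  have hsq : -(x - 0) ^ 2 / (2 * ((1 : ℝ≥0) : ℝ)) + s * (m + x) ^ 2
      = s * m ^ 2 / (1 - 2 * s) + -(x - 2 * s * m / (1 - 2 * s)) ^ 2 / (2 * (1 - 2 * s)⁻¹) := by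
    push_cast
    field_simp
    ring
  have hnorm : √(2 * π * (1 - 2 * s)⁻¹) = √(2 * π) * (1 - 2 * s) ^ (-(1 / 2 : ℝ)) := by
    rw [sqrt_mul (by positivity), sqrt_inv, rpow_neg hd.le, ← sqrt_eq_rpow]
  rw [gaussianPDFReal, gaussianPDFReal, hv, hnorm, mul_assoc, ← exp_add, hsq, exp_add,
    NNReal.coe_one, mul_one]
  field_simp

lemma lintegral_exp_mul_sq_add_gaussianReal {s : ℝ} (hs : s < 1 / 2) (m : ℝ) :
    ∫⁻ x, ENNReal.ofReal (rexp (s * (m + x) ^ 2)) ∂gaussianReal 0 1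
      = ENNReal.ofReal ((1 - 2 * s) ^ (-(1 / 2 : ℝ)) * rexp (s * m ^ 2 / (1 - 2 * s))) := by
  have hv : (1 - 2 * s)⁻¹.toNNReal ≠ 0 := by
    simp only [ne_eq, toNNReal_eq_zero, not_le, inv_pos]
    linarith
  rw [gaussianReal_of_var_ne_zero 0 one_ne_zero,
    lintegral_withDensity_eq_lintegral_mul _ (measurable_gaussianPDF 0 1) (by fun_prop)]
  simp only [Pi.mul_apply, gaussianPDF, ← ENNReal.ofReal_mul (gaussianPDFReal_nonneg _ _ _),
    gaussianPDFReal_mul_exp_mul_sq_add hs]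
  have hc : 0 ≤ (1 - 2 * s) ^ (-(1 / 2 : ℝ)) * rexp (s * m ^ 2 / (1 - 2 * s)) :=
    mul_nonneg (rpow_nonneg (by linarith) _) (exp_pos _).le
  simp only [ENNReal.ofReal_mul hc]
  rw [lintegral_const_mul _ (measurable_gaussianPDFReal _ _).ennreal_ofReal,
    lintegral_gaussianPDFReal_eq_one _ hv, mul_one]

lemma lintegral_exp_mul_sq_add_div_sqrt_gaussianReal {lam t : ℝ} (hlam : 0 < lam) (ht : t < lam)
    (c : ℝ) :
    ∫⁻ n, ENNReal.ofReal (rexp (t * (c + n / √(2 * lam)) ^ 2)) ∂gaussianReal 0 1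
      = ENNReal.ofReal ((1 - t / lam) ^ (-(1 / 2 : ℝ)) * rexp (t * c ^ 2 / (1 - t / lam))) := by
  have hw : √(2 * lam) ^ 2 = 2 * lam := sq_sqrt (by positivity)
  have hscale : ∀ n : ℝ, t * (c + n / √(2 * lam)) ^ 2
      = t / (2 * lam) * (√(2 * lam) * c + n) ^ 2 := fun n => by
    nth_rw 2 [← hw]
    field_simp
  have hs : 1 - 2 * (t / (2 * lam)) = 1 - t / lam := by field_simp
  simp only [hscale]
  have hs_lt : t / (2 * lam) < 1 / 2 := by rw [div_lt_iff₀ (by positivity)]; linarith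
  rw [lintegral_exp_mul_sq_add_gaussianReal hs_lt, hs, mul_pow, hw]
  field_simp

lemma lintegral_comp_prodMk_of_indepFun {Ω α β : Type*} {_ : MeasurableSpace Ω}
    [MeasurableSpace α] [MeasurableSpace β] {μ : Measure Ω} [IsFiniteMeasure μ]
    {X : Ω → α} {Y : Ω → β} (hX : Measurable X) (hY : Measurable Y) (hXY : IndepFun X Y μ)
    {f : α × β → ℝ≥0∞} (hf : Measurable f) :
    ∫⁻ ω, f (X ω, Y ω) ∂μ = ∫⁻ x, ∫⁻ y, f (x, y) ∂μ.map Y ∂μ.map X := by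
  rw [← lintegral_prod _ hf.aemeasurable,
    ← (indepFun_iff_map_prod_eq_prod_map_map hX.aemeasurable hY.aemeasurable).mp hXY,
    lintegral_map hf (hX.prodMk hY)]

section Channel

variable {Ω : Type*} {_ : MeasurableSpace Ω} {μ : Measure Ω} [IsFiniteMeasure μ]
  {X G N : Ω → ℝ} {lam r t : ℝ}

lemma lintegral_exp_mul_sq_sqrt_add_gaussian (hlam : 0 < lam) (hr : 0 ≤ r) (ht : t < lam)
    (hX : Measurable X) (hN : Measurable N) (hXN : IndepFun X N μ) (hX0 : ∀ᵐ ω ∂μ, 0 ≤ X ω)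
    (hNlaw : μ.map N = gaussianReal 0 1) :
    ∫⁻ ω, ENNReal.ofReal (rexp (t * (√(r * X ω) + N ω / √(2 * lam)) ^ 2)) ∂μ
      = ENNReal.ofReal ((1 - t / lam) ^ (-(1 / 2 : ℝ)))
        * ∫⁻ ω, ENNReal.ofReal (rexp (r * t / (1 - t / lam) * X ω)) ∂μ := by
  rw [lintegral_comp_prodMk_of_indepFun hX hN hXN
      (f := fun p => ENNReal.ofReal (rexp (t * (√(r * p.1) + p.2 / √(2 * lam)) ^ 2)))
      (by fun_prop), hNlaw, ← lintegral_const_mul _ (by fun_prop),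
    lintegral_map (by fun_prop) hX]
  refine lintegral_congr_ae ?_
  filter_upwards [hX0] with ω hω
  have hd : 0 < 1 - t / lam := by rw [sub_pos, div_lt_one hlam]; exact ht
  rw [lintegral_exp_mul_sq_add_div_sqrt_gaussianReal hlam ht, sq_sqrt (mul_nonneg hr hω),
    ENNReal.ofReal_mul (rpow_nonneg hd.le _)]
  congr 3
  ring

lemma lintegral_exp_mul_gamma_add_sq_sqrt_add_gaussian {β : ℝ} (hβ : 0 < β) (hlam : 0 < lam)
    (hr : 0 ≤ r) (ht : t < lam) (hX : Measurable X) (hG : Measurable G) (hN : Measurable N)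
    (hXN : IndepFun X N μ) (hGXN : IndepFun G (fun ω => (X ω, N ω)) μ)
    (hX0 : ∀ᵐ ω ∂μ, 0 ≤ X ω) (hGlaw : μ.map G = gammaMeasure β lam)
    (hNlaw : μ.map N = gaussianReal 0 1) :
    ∫⁻ ω, ENNReal.ofReal (rexp (t * (G ω + (√(r * X ω) + N ω / √(2 * lam)) ^ 2))) ∂μ
      = ENNReal.ofReal ((1 - t / lam) ^ (-(β + 1 / 2)))
        * ∫⁻ ω, ENNReal.ofReal (rexp (r * t / (1 - t / lam) * X ω)) ∂μ := by
  have hd : 0 < 1 - t / lam := by rw [sub_pos, div_lt_one hlam]; exact ht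
  have hindep : IndepFun (fun ω => ENNReal.ofReal (rexp (t * G ω)))
      (fun ω => ENNReal.ofReal (rexp (t * (√(r * X ω) + N ω / √(2 * lam)) ^ 2))) μ := by
    have hφ : Measurable fun g : ℝ => ENNReal.ofReal (rexp (t * g)) := by fun_prop
    have hψ : Measurable fun p : ℝ × ℝ =>
        ENNReal.ofReal (rexp (t * (√(r * p.1) + p.2 / √(2 * lam)) ^ 2)) := by fun_prop
    exact hGXN.comp hφ hψ
  have hsplit : ∀ ω, ENNReal.ofReal (rexp (t * (G ω + (√(r * X ω) + N ω / √(2 * lam)) ^ 2)))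
      = ENNReal.ofReal (rexp (t * G ω))
        * ENNReal.ofReal (rexp (t * (√(r * X ω) + N ω / √(2 * lam)) ^ 2)) := fun ω => by
    rw [mul_add, exp_add, ENNReal.ofReal_mul (exp_pos _).le]
  simp only [hsplit]
  rw [lintegral_mul_eq_lintegral_mul_lintegral_of_indepFun'' (by fun_prop) (by fun_prop) hindep,
    ← lintegral_map (f := fun g => ENNReal.ofReal (rexp (t * g))) (by fun_prop) hG, hGlaw,
    lintegral_exp_mul_gammaMeasure hβ hlam ht,
    lintegral_exp_mul_sq_sqrt_add_gaussian hlam hr ht hX hN hXN hX0 hNlaw, ← mul_assoc,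
    ← ENNReal.ofReal_mul (rpow_nonneg hd.le _), ← rpow_add hd, neg_add]

end Channel

theorem mgf_quadratic_gamma_channel_general
    {Ω : Type*} [MeasureSpace Ω] [IsProbabilityMeasure (ℙ : Measure Ω)]
    (α lam r a : ℝ) (hα : 1 / 2 ≤ α) (hlam : 0 < lam) (hr : 0 < r) (ha : 0 < a)
    (X G N : Ω → ℝ) (hXmeas : Measurable X) (hGmeas : Measurable G)
    (hNmeas : Measurable N)
    (hindep : iIndepFun ![X, G, N] ℙ)
    (hXpos : ∀ᵐ ω ∂ℙ, 0 < X ω)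
    (hG : Measure.map G ℙ = gammaMeasure (α - 1 / 2) lam)
    (hN : Measure.map N ℙ = gaussianReal 0 1)
    (Xr : Ω → ℝ)
    (hXr : Xr = fun ω => G ω + (Real.sqrt (r * X ω) + N ω / Real.sqrt (2 * lam)) ^ 2) :
    ∀ t : ℝ, 0 < t → t < lam / (lam * r / a + 1) →
      ∫ ω, Real.exp (t * Xr ω) ∂ℙ
        = (1 - t / lam) ^ (-α) * ∫ ω, Real.exp ((r * t / (1 - t / lam)) * X ω) ∂ℙ := by
  intro t _ ht
  have htlam : t < lam :=
    ht.trans_le (div_le_self hlam.le (le_add_of_nonneg_left (by positivity)))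
  have hβ : 0 < α - 1 / 2 := by
    refine (sub_nonneg.mpr hα).lt_of_ne' fun hβ0 => ?_
    have := (Measure.isProbabilityMeasure_map hGmeas.aemeasurable (μ := ℙ)).ne_zero
    rw [hG, hβ0, gammaMeasure_zero_left] at this
    exact this rfl
  have hmeas : ∀ i, Measurable (![X, G, N] i) := fun i => by fin_cases i <;> assumption
  have hXN : IndepFun X N ℙ := hindep.indepFun (show (0 : Fin 3) ≠ 2 by decide)
  have hGXN : IndepFun G (fun ω => (X ω, N ω)) ℙ :=
    (hindep.indepFun_prodMk hmeas 0 2 1 (by decide) (by decide)).symm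
  have key := lintegral_exp_mul_gamma_add_sq_sqrt_add_gaussian hβ hlam hr.le htlam hXmeas hGmeas
    hNmeas hXN hGXN (hXpos.mono fun _ => le_of_lt) hG hN
  rw [sub_add_cancel] at key
  subst hXr
  rw [integral_eq_lintegral_of_nonneg_ae (ae_of_all _ fun _ => (exp_pos _).le) (by fun_prop),
    integral_eq_lintegral_of_nonneg_ae (ae_of_all _ fun _ => (exp_pos _).le) (by fun_prop),
    key, ENNReal.toReal_mul,
    ENNReal.toReal_ofReal (rpow_nonneg (sub_pos.2 ((div_lt_one hlam).2 htlam)).le _)]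

/-- **MGF of the quadratic gamma channel.** Let `X` be positive with MGF finite on `(0, a)`,
`α ≥ 1/2`, `λ > 0`, `r > 0`, and `X_r = G + (√(rX) + N/√(2λ))²` with `G ~ Gamma(α-1/2, λ)`,
`N` standard Gaussian, `X, G, N` mutually independent. Then for `0 < t < λ/(λr/a + 1)`,
`E[exp(t X_r)] = (1 - t/λ)^{-α} · M_X(rt/(1 - t/λ))`. -/
theorem mgf_quadratic_gamma_channel
    {Ω : Type*} [MeasureSpace Ω] [IsProbabilityMeasure (ℙ : Measure Ω)]
    (α lam r a : ℝ) (hα : 1 / 2 ≤ α) (hlam : 0 < lam) (hr : 0 < r) (ha : 0 < a)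
    (X G N : Ω → ℝ) (hXmeas : Measurable X) (hGmeas : Measurable G)
    (hNmeas : Measurable N)
    (hindep : iIndepFun ![X, G, N] ℙ)
    (hXpos : ∀ᵐ ω ∂ℙ, 0 < X ω)
    (hG : Measure.map G ℙ = gammaMeasure (α - 1 / 2) lam)
    (hN : Measure.map N ℙ = gaussianReal 0 1)
    (hmgf : ∀ t ∈ Set.Ioo (0 : ℝ) a, Integrable (fun ω => Real.exp (t * X ω)) ℙ)
    (Xr : Ω → ℝ)
    (hXr : Xr = fun ω => G ω + (Real.sqrt (r * X ω) + N ω / Real.sqrt (2 * lam)) ^ 2) :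
    ∀ t : ℝ, 0 < t → t < lam / (lam * r / a + 1) →
      ∫ ω, Real.exp (t * Xr ω) ∂ℙ
        = (1 - t / lam) ^ (-α) * ∫ ω, Real.exp ((r * t / (1 - t / lam)) * X ω) ∂ℙ :=
  mgf_quadratic_gamma_channel_general α lam r a hα hlam hr ha X G N hXmeas hGmeas hNmeas hindep
    hXpos hG hN Xr hXr
end
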